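/- Let A ∈ ℝ^{n×n} have the unique LU factorization A = LU and let ΔA ∈ ℝ^{n×n}. If ‖Y_L‖₂ · ‖Y_U‖₂ · ‖ΔA‖_F < 1/4, then A + ΔA has a unique LU factorization A + ΔA = (L + ΔL)(U + ΔU) with ΔL strictly lower triangular and ΔU upper triangular, and moreover ‖ΔU‖_F ≤ 2‖Y_U‖₂‖ΔA‖_F / (1 + √(1 − 4‖Y_U‖₂‖Y_L‖₂‖ΔA‖_F)) ≤ 2‖Y_U‖₂‖ΔA‖_F. -/

import Mathlib

open Matrix Kronecker

noncomputable section

/-- Frobenius norm of a real matrix. -/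
noncomputable def frob {m k : Type*} [Fintype m] [Fintype k] (A : Matrix m k ℝ) : ℝ :=
  Real.sqrt (∑ i, ∑ j, (A i j) ^ 2)

/-- Euclidean norm of a vector. -/
noncomputable def vnorm {m : Type*} [Fintype m] (v : m → ℝ) : ℝ :=
  Real.sqrt (∑ i, (v i) ^ 2)

/-- Spectral norm (ℓ²-operator norm) of a real matrix. -/
noncomputable def spec {m k : Type*} [Fintype m] [Fintype k] [DecidableEq k]
    (A : Matrix m k ℝ) : ℝ :=
  ‖LinearMap.toContinuousLinearMap (Matrix.toEuclideanLin A)‖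

/-- Entrywise absolute value of a matrix. -/
def eabs {m k : Type*} (A : Matrix m k ℝ) : Matrix m k ℝ :=
  Matrix.of fun i j => |A i j|

/-- Column-stacking operator: `vec X` indexed by (column, row). -/
def vec {n : ℕ} (X : Matrix (Fin n) (Fin n) ℝ) : Fin n × Fin n → ℝ :=
  fun p => X p.2 p.1

/-- Upper triangular part of a matrix. -/
def ut {n : ℕ} (X : Matrix (Fin n) (Fin n) ℝ) : Matrix (Fin n) (Fin n) ℝ :=
  Matrix.of fun i j => if i ≤ j then X i j else 0

/-- Strictly lower triangular part of a matrix. -/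
def slt {n : ℕ} (X : Matrix (Fin n) (Fin n) ℝ) : Matrix (Fin n) (Fin n) ℝ :=
  Matrix.of fun i j => if j < i then X i j else 0

/-- Upper triangular part with diagonal halved. -/
def up {n : ℕ} (X : Matrix (Fin n) (Fin n) ℝ) : Matrix (Fin n) (Fin n) ℝ :=
  Matrix.of fun i j => if i = j then X i j / 2 else if i ≤ j then X i j else 0

/-- `M_ut`: diagonal matrix with `vec (ut X) = (Mut n).mulVec (vec X)`. -/
def Mut (n : ℕ) : Matrix (Fin n × Fin n) (Fin n × Fin n) ℝ :=
  Matrix.diagonal fun p => if p.2 ≤ p.1 then 1 else 0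

/-- `M_slt`: diagonal matrix with `vec (slt X) = (Mslt n).mulVec (vec X)`. -/
def Mslt (n : ℕ) : Matrix (Fin n × Fin n) (Fin n × Fin n) ℝ :=
  Matrix.diagonal fun p => if p.1 < p.2 then 1 else 0

/-- `M_up`: diagonal matrix with `vec (up X) = (Mup n).mulVec (vec X)`. -/
def Mup (n : ℕ) : Matrix (Fin n × Fin n) (Fin n × Fin n) ℝ :=
  Matrix.diagonal fun p => if p.2 = p.1 then (1 : ℝ) / 2 else if p.2 < p.1 then 1 else 0

/-- `M_uvec`: 0–1 row-selection matrix extracting entries on or above the diagonal. -/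
def Muvec (n : ℕ) : Matrix {p : Fin n × Fin n // p.2 ≤ p.1} (Fin n × Fin n) ℝ :=
  Matrix.of fun q p => if (q : Fin n × Fin n) = p then 1 else 0

/-- `M_slvec`: 0–1 row-selection matrix extracting entries strictly below the diagonal. -/
def Mslvec (n : ℕ) : Matrix {p : Fin n × Fin n // p.1 < p.2} (Fin n × Fin n) ℝ :=
  Matrix.of fun q p => if (q : Fin n × Fin n) = p then 1 else 0

/-- The vec-permutation matrix `Π_{nn}` with `(vecPerm n).mulVec (vec X) = vec Xᵀ`. -/
def vecPerm (n : ℕ) : Matrix (Fin n × Fin n) (Fin n × Fin n) ℝ :=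
  Matrix.of fun p q => if p.1 = q.2 ∧ p.2 = q.1 then 1 else 0

def IsUnitLowerTri {n : ℕ} (L : Matrix (Fin n) (Fin n) ℝ) : Prop :=
  (∀ i, L i i = 1) ∧ ∀ i j : Fin n, i < j → L i j = 0

def IsLowerTri {n : ℕ} (L : Matrix (Fin n) (Fin n) ℝ) : Prop :=
  ∀ i j : Fin n, i < j → L i j = 0

def IsUpperTri {n : ℕ} (U : Matrix (Fin n) (Fin n) ℝ) : Prop :=
  ∀ i j : Fin n, j < i → U i j = 0

def IsStrictLowerTri {n : ℕ} (X : Matrix (Fin n) (Fin n) ℝ) : Prop :=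
  ∀ i j : Fin n, i ≤ j → X i j = 0

/-- Leading (n−1)×(n−1) principal submatrix. -/
def lead {n : ℕ} (U : Matrix (Fin n) (Fin n) ℝ) : Matrix (Fin (n - 1)) (Fin (n - 1)) ℝ :=
  Matrix.of fun i j => U (Fin.castLE (Nat.sub_le n 1) i) (Fin.castLE (Nat.sub_le n 1) j)

/-- `pad B` is the n×n matrix with B as leading (n−1)×(n−1) block and zeros elsewhere. -/
def pad {n : ℕ} (B : Matrix (Fin (n - 1)) (Fin (n - 1)) ℝ) : Matrix (Fin n) (Fin n) ℝ :=
  Matrix.of fun i j =>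
    if h1 : (i : ℕ) < n - 1 then
      if h2 : (j : ℕ) < n - 1 then B ⟨i, h1⟩ ⟨j, h2⟩ else 0
    else 0

/-- `Y_L = M_slvec (I_n ⊗ L) M_slt (diag(U_{n−1}^{−T}, 0) ⊗ L^{−1})`. -/
noncomputable def YL {n : ℕ} (L U : Matrix (Fin n) (Fin n) ℝ) :
    Matrix {p : Fin n × Fin n // p.1 < p.2} (Fin n × Fin n) ℝ :=
  Mslvec n * ((1 : Matrix (Fin n) (Fin n) ℝ) ⊗ₖ L) * Mslt n *
    (pad (((lead U)⁻¹)ᵀ) ⊗ₖ L⁻¹)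

/-- `Y_U = M_uvec (Uᵀ ⊗ I_n) M_ut (U^{−T} ⊗ L^{−1})`. -/
noncomputable def YU {n : ℕ} (L U : Matrix (Fin n) (Fin n) ℝ) :
    Matrix {p : Fin n × Fin n // p.2 ≤ p.1} (Fin n × Fin n) ℝ :=
  Muvec n * (Uᵀ ⊗ₖ (1 : Matrix (Fin n) (Fin n) ℝ)) * Mut n * ((U⁻¹)ᵀ ⊗ₖ L⁻¹)

/-- `G_R = M_uvec (Rᵀ ⊗ I_n) M_up [R^{−T} ⊗ I_n + (I_n ⊗ R^{−T}) Π_{nn}]`. -/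
noncomputable def GR {n : ℕ} (R : Matrix (Fin n) (Fin n) ℝ) :
    Matrix {p : Fin n × Fin n // p.2 ≤ p.1} (Fin n × Fin n) ℝ :=
  Muvec n * (Rᵀ ⊗ₖ (1 : Matrix (Fin n) (Fin n) ℝ)) * Mup n *
    ((R⁻¹)ᵀ ⊗ₖ (1 : Matrix (Fin n) (Fin n) ℝ) +
      ((1 : Matrix (Fin n) (Fin n) ℝ) ⊗ₖ (R⁻¹)ᵀ) * vecPerm n)

/-- `H_R = M_uvec (Rᵀ ⊗ I_n) M_up (R^{−T} ⊗ R^{−T})`. -/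
noncomputable def HR {n : ℕ} (R : Matrix (Fin n) (Fin n) ℝ) :
    Matrix {p : Fin n × Fin n // p.2 ≤ p.1} (Fin n × Fin n) ℝ :=
  Muvec n * (Rᵀ ⊗ₖ (1 : Matrix (Fin n) (Fin n) ℝ)) * Mup n * ((R⁻¹)ᵀ ⊗ₖ (R⁻¹)ᵀ)

/-!
For a matrix `G`, the triangular solution of `L ΔU + ΔL U = G` is `ΔL = L · slt (L⁻¹ G U⁻¹)`,
`ΔU = ut (L⁻¹ G U⁻¹) · U`, and `(L + ΔL)(U + ΔU) = A + ΔA` exactly when moreover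
`G = ΔA - ΔL ΔU`. Since `Y_L vec G` and `Y_U vec G` list the possibly nonzero entries of `vec ΔL`
and `vec ΔU`, in the Frobenius norm `‖ΔL‖ ≤ ‖Y_L‖₂ ‖G‖` and `‖ΔU‖ ≤ ‖Y_U‖₂ ‖G‖`. Hence
`G ↦ ΔA - ΔL ΔU` is a contraction of the ball whose radius `r` is the smaller root of
`r = ‖ΔA‖ + ‖Y_L‖₂ ‖Y_U‖₂ r²`; its fixed point gives the factorization, with `‖ΔU‖ ≤ ‖Y_U‖₂ r`.
Testing `Y_L` on `e_{i+1} e_iᵀ` shows `‖Y_L‖₂ ≥ |U⁻¹ i i| = 1 / |U i i|` for `i < n - 1`, so the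
first `n - 1` pivots of `U + ΔU` stay nonzero, which makes the factorization unique.
-/

attribute [local instance] Matrix.frobeniusNormedAddCommGroup Matrix.frobeniusNormedSpace

section QuadraticFixedPoint

variable {c ε : ℝ}

/-- The smaller root of `c r² - r + ε = 0`, written so that it also makes sense for `c = 0`. -/
def quadSmallRoot (c ε : ℝ) : ℝ := 2 * ε / (1 + √(1 - 4 * c * ε))

lemma quadSmallRoot_nonneg (hε : 0 ≤ ε) : 0 ≤ quadSmallRoot c ε := by
  unfold quadSmallRoot; positivity

lemma add_mul_quadSmallRoot_sq (h : 4 * c * ε ≤ 1) :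
    ε + c * quadSmallRoot c ε ^ 2 = quadSmallRoot c ε := by
  unfold quadSmallRoot
  have hσ : √(1 - 4 * c * ε) ^ 2 = 1 - 4 * c * ε := Real.sq_sqrt (by linarith)
  have hσ0 : 0 ≤ √(1 - 4 * c * ε) := Real.sqrt_nonneg _
  generalize √(1 - 4 * c * ε) = σ at hσ hσ0 ⊢
  field_simp
  linear_combination ε * hσ

lemma quadSmallRoot_le (hε : 0 ≤ ε) : quadSmallRoot c ε ≤ 2 * ε :=
  div_le_self (by linarith) (by simp [Real.sqrt_nonneg])

lemma two_mul_mul_quadSmallRoot_lt_one (hc : 0 ≤ c) (hε : 0 ≤ ε) (h : 4 * c * ε < 1) :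
    2 * c * quadSmallRoot c ε < 1 := by
  nlinarith [mul_le_mul_of_nonneg_left (quadSmallRoot_le (c := c) hε) hc]

variable {E : Type*} [NormedAddCommGroup E] [CompleteSpace E]

theorem exists_fixedPoint_norm_le_quadSmallRoot (f : E → E) (hc : 0 ≤ c) (h : 4 * c * ε < 1)
    (hbound : ∀ x, ‖f x‖ ≤ ε + c * ‖x‖ ^ 2)
    (hlip : ∀ x y, ‖f x - f y‖ ≤ c * (‖x‖ + ‖y‖) * ‖x - y‖) :
    ∃ x, f x = x ∧ ‖x‖ ≤ quadSmallRoot c ε := by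
  have hε : 0 ≤ ε := (norm_nonneg _).trans (by simpa using hbound 0)
  set r := quadSmallRoot c ε
  have hr : 0 ≤ r := quadSmallRoot_nonneg hε
  have hmaps : Set.MapsTo f (Metric.closedBall 0 r) (Metric.closedBall 0 r) := by
    intro x hx
    rw [mem_closedBall_zero_iff] at hx ⊢
    calc ‖f x‖ ≤ ε + c * ‖x‖ ^ 2 := hbound x
      _ ≤ ε + c * r ^ 2 := by gcongr
      _ = r := add_mul_quadSmallRoot_sq h.le
  have hK : 0 ≤ 2 * c * r := by positivity
  have hlipOn : LipschitzOnWith (Real.toNNReal (2 * c * r)) f (Metric.closedBall 0 r) := by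
    refine LipschitzOnWith.of_dist_le_mul fun x hx y hy => ?_
    rw [mem_closedBall_zero_iff] at hx hy
    rw [dist_eq_norm, dist_eq_norm, Real.coe_toNNReal _ hK]
    calc ‖f x - f y‖ ≤ c * (‖x‖ + ‖y‖) * ‖x - y‖ := hlip x y
      _ ≤ c * (r + r) * ‖x - y‖ := by gcongr
      _ = 2 * c * r * ‖x - y‖ := by ring
  have hcontr : ContractingWith (Real.toNNReal (2 * c * r)) (hmaps.restrict f _ _) :=
    ⟨by simpa using two_mul_mul_quadSmallRoot_lt_one hc hε h, hlipOn.mapsToRestrict hmaps⟩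
  obtain ⟨x, hx, hfix, -⟩ := hcontr.exists_fixedPoint' Metric.isClosed_closedBall.isComplete hmaps
    (Metric.mem_closedBall_self hr) (edist_ne_top _ _)
  exact ⟨x, hfix, mem_closedBall_zero_iff.mp hx⟩

end QuadraticFixedPoint

section Norms

variable {ι m k : Type*} [Fintype ι] [Fintype m] [Fintype k]

lemma frobenius_norm_eq_sqrt (X : Matrix m k ℝ) : ‖X‖ = √(∑ i, ∑ j, X i j ^ 2) := by
  change ‖WithLp.toLp 2 fun i => WithLp.toLp 2 (X i)‖ = _
  simp only [PiLp.norm_eq_of_L2, Real.sq_sqrt (Finset.sum_nonneg fun _ _ => sq_nonneg _),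
    Real.norm_eq_abs, sq_abs]

lemma frob_eq_norm (X : Matrix m k ℝ) : frob X = ‖X‖ := (frobenius_norm_eq_sqrt X).symm

lemma abs_apply_le_frobenius_norm (X : Matrix m k ℝ) (i : m) (j : k) : |X i j| ≤ ‖X‖ :=
  calc |X i j| = ‖X i j‖ := (Real.norm_eq_abs _).symm
    _ ≤ ‖WithLp.toLp 2 (X i)‖ := PiLp.norm_apply_le (WithLp.toLp 2 (X i)) j
    _ ≤ ‖X‖ := PiLp.norm_apply_le (WithLp.toLp 2 fun i => WithLp.toLp 2 (X i)) i

lemma norm_toLp_vec (X : Matrix m k ℝ) : ‖WithLp.toLp 2 X.vec‖ = ‖X‖ := by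
  rw [EuclideanSpace.norm_eq, frobenius_norm_eq_sqrt, Fintype.sum_prod_type, Finset.sum_comm]
  simp [Matrix.vec, sq_abs]

lemma norm_toLp_subtype_of_eq_zero {P : ι → Prop} [DecidablePred P] (v : ι → ℝ)
    (hv : ∀ i, ¬P i → v i = 0) :
    ‖WithLp.toLp 2 (fun q : Subtype P => v q)‖ = ‖WithLp.toLp 2 v‖ := by
  simp only [EuclideanSpace.norm_eq, Real.norm_eq_abs, sq_abs]
  rw [← Fintype.sum_subtype_add_sum_subtype P,
    Fintype.sum_eq_zero (fun q : {i // ¬P i} => v q ^ 2) (fun q => by simp [hv q q.2]), add_zero]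

lemma norm_toLp_mulVec_le_spec [DecidableEq k] (A : Matrix m k ℝ) (x : k → ℝ) :
    ‖WithLp.toLp 2 (A *ᵥ x)‖ ≤ spec A * ‖WithLp.toLp 2 x‖ :=
  (LinearMap.toContinuousLinearMap (Matrix.toEuclideanLin A)).le_opNorm (WithLp.toLp 2 x)

end Norms

lemma Matrix.BlockTriangular.mul_apply_self {m α R : Type*} [Fintype m] [LinearOrder α]
    [NonUnitalNonAssocSemiring R] {M N : Matrix m m R} {b : m → α} (hb : Function.Injective b)
    (hM : M.BlockTriangular b) (hN : N.BlockTriangular b) (i : m) :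
    (M * N) i i = M i i * N i i := by
  rw [Matrix.mul_apply]
  refine Finset.sum_eq_single i (fun k _ hki => ?_) (by simp)
  rcases lt_or_gt_of_ne (hb.ne hki) with h | h
  · rw [hM h, zero_mul]
  · rw [hN h, mul_zero]

section Triangular

variable {n : ℕ} {L U X : Matrix (Fin n) (Fin n) ℝ}

lemma IsUpperTri.blockTriangular (hU : IsUpperTri U) : U.BlockTriangular id :=
  fun i j h => hU i j h

lemma IsLowerTri.blockTriangular (hL : IsLowerTri L) : L.BlockTriangular OrderDual.toDual :=
  fun i j h => hL i j h

lemma IsUnitLowerTri.isLowerTri (hL : IsUnitLowerTri L) : IsLowerTri L := hL.2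

lemma IsUnitLowerTri.isUnit_det (hL : IsUnitLowerTri L) : IsUnit L.det := by
  simp [Matrix.det_of_isLowerTriangular L hL.isLowerTri.blockTriangular, hL.1]

lemma IsLowerTri.inv (hL : IsLowerTri L) : IsLowerTri L⁻¹ := by
  by_cases h : IsUnit L.det
  · have := L.invertibleOfIsUnitDet h
    exact fun i j hij => Matrix.blockTriangular_inv_of_blockTriangular hL.blockTriangular hij
  · simp [Matrix.nonsing_inv_apply_not_isUnit L h, IsLowerTri]

lemma IsUpperTri.inv (hU : IsUpperTri U) : IsUpperTri U⁻¹ := by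
  by_cases h : IsUnit U.det
  · have := U.invertibleOfIsUnitDet h
    exact fun i j hij => Matrix.blockTriangular_inv_of_blockTriangular hU.blockTriangular hij
  · simp [Matrix.nonsing_inv_apply_not_isUnit U h, IsUpperTri]

lemma IsUnitLowerTri.inv (hL : IsUnitLowerTri L) : IsUnitLowerTri L⁻¹ := by
  refine ⟨fun i => ?_, hL.isLowerTri.inv⟩
  have h := congrFun (congrFun (Matrix.nonsing_inv_mul L hL.isUnit_det) i) i
  rwa [Matrix.BlockTriangular.mul_apply_self OrderDual.toDual.injective
    hL.isLowerTri.inv.blockTriangular hL.isLowerTri.blockTriangular, hL.1, mul_one,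
    Matrix.one_apply_eq] at h

lemma IsUnitLowerTri.mul {L' : Matrix (Fin n) (Fin n) ℝ} (hL : IsUnitLowerTri L)
    (hL' : IsUnitLowerTri L') : IsUnitLowerTri (L * L') := by
  refine ⟨fun i => ?_, fun i j hij => (hL.isLowerTri.blockTriangular.mul
    hL'.isLowerTri.blockTriangular) hij⟩
  rw [Matrix.BlockTriangular.mul_apply_self OrderDual.toDual.injective
    hL.isLowerTri.blockTriangular hL'.isLowerTri.blockTriangular, hL.1, hL'.1, mul_one]

lemma IsUpperTri.inv_apply_self_mul (hU : IsUpperTri U) (hdet : IsUnit U.det) (i : Fin n) :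
    U⁻¹ i i * U i i = 1 := by
  have h := congrFun (congrFun (Matrix.nonsing_inv_mul U hdet) i) i
  rwa [Matrix.BlockTriangular.mul_apply_self Function.injective_id
    hU.inv.blockTriangular hU.blockTriangular, Matrix.one_apply_eq] at h

lemma IsUpperTri.mul (hX : IsUpperTri X) (hU : IsUpperTri U) : IsUpperTri (X * U) :=
  fun _ _ h => Matrix.BlockTriangular.mul hX.blockTriangular hU.blockTriangular h

lemma IsLowerTri.mul_isStrictLowerTri (hL : IsLowerTri L) (hX : IsStrictLowerTri X) :
    IsStrictLowerTri (L * X) := by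
  intro i j hij
  rw [Matrix.mul_apply]
  refine Finset.sum_eq_zero fun k _ => ?_
  rcases le_or_gt k j with hk | hk
  · rw [hX k j hk, mul_zero]
  · rw [hL i k (hij.trans_lt hk), zero_mul]

lemma IsUnitLowerTri.add (hL : IsUnitLowerTri L) (hX : IsStrictLowerTri X) :
    IsUnitLowerTri (L + X) :=
  ⟨fun i => by simp [hL.1 i, hX i i le_rfl], fun i j hij => by simp [hL.2 i j hij, hX i j hij.le]⟩

lemma IsUpperTri.add (hU : IsUpperTri U) (hX : IsUpperTri X) : IsUpperTri (U + X) :=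
  fun i j hij => by simp [hU i j hij, hX i j hij]

lemma isUpperTri_ut (X : Matrix (Fin n) (Fin n) ℝ) : IsUpperTri (ut X) :=
  fun i j h => by simp [ut, not_le.mpr h]

lemma isStrictLowerTri_slt (X : Matrix (Fin n) (Fin n) ℝ) : IsStrictLowerTri (slt X) :=
  fun i j h => by simp [slt, not_lt.mpr h]

lemma ut_add_slt (X : Matrix (Fin n) (Fin n) ℝ) : ut X + slt X = X := by
  ext i j
  by_cases h : i ≤ j <;> simp [ut, slt, h]

lemma ut_sub (X Y : Matrix (Fin n) (Fin n) ℝ) : ut (X - Y) = ut X - ut Y := by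
  ext i j
  by_cases h : i ≤ j <;> simp [ut, h]

lemma slt_sub (X Y : Matrix (Fin n) (Fin n) ℝ) : slt (X - Y) = slt X - slt Y := by
  ext i j
  by_cases h : j < i <;> simp [slt, h]

lemma lu_unique {L₁ L₂ U₁ U₂ : Matrix (Fin n) (Fin n) ℝ} (hL₁ : IsUnitLowerTri L₁)
    (hL₂ : IsUnitLowerTri L₂) (hU₁ : IsUpperTri U₁) (hU₂ : IsUpperTri U₂)
    (hdiag : ∀ j : Fin n, (j : ℕ) + 1 < n → U₁ j j ≠ 0) (h : L₁ * U₁ = L₂ * U₂) :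
    L₁ = L₂ ∧ U₁ = U₂ := by
  set D := L₂⁻¹ * L₁
  have hD : IsUnitLowerTri D := hL₂.inv.mul hL₁
  have hL₂D : L₂ * D = L₁ := by
    rw [← Matrix.mul_assoc, Matrix.mul_nonsing_inv _ hL₂.isUnit_det, Matrix.one_mul]
  have hDU : D * U₁ = U₂ := by
    rw [Matrix.mul_assoc, h, ← Matrix.mul_assoc, Matrix.nonsing_inv_mul _ hL₂.isUnit_det,
      Matrix.one_mul]
  -- column by column, `D * U₁` upper triangular forces the subdiagonal part of `D` to vanish
  have hcol : ∀ j i : Fin n, j < i → D i j = 0 := by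
    intro j
    induction j using WellFoundedLT.induction with
    | ind j ih =>
      intro i hji
      have hsum : (D * U₁) i j = D i j * U₁ j j := by
        rw [Matrix.mul_apply]
        refine Finset.sum_eq_single j (fun k _ hkj => ?_) (by simp)
        rcases lt_or_gt_of_ne hkj with hk | hk
        · rw [ih k hk i (hk.trans hji), zero_mul]
        · rw [hU₁ k j hk, mul_zero]
      have hjn : (j : ℕ) + 1 < n := by omega
      rw [hDU, hU₂ i j hji] at hsum
      exact (mul_eq_zero.mp hsum.symm).resolve_right (hdiag j hjn)
  have hD1 : D = 1 := by
    ext i j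
    rcases lt_trichotomy i j with hij | rfl | hij
    · rw [hD.2 i j hij, Matrix.one_apply_ne hij.ne]
    · rw [hD.1 i, Matrix.one_apply_eq]
    · rw [hcol j i hij, Matrix.one_apply_ne hij.ne']
  rw [hD1] at hL₂D hDU
  exact ⟨by simpa using hL₂D.symm, by simpa using hDU⟩

end Triangular

section Vectorization

variable {n : ℕ}

lemma Mut_mulVec_vec (X : Matrix (Fin n) (Fin n) ℝ) : Mut n *ᵥ X.vec = (ut X).vec := by
  ext ⟨j, i⟩
  by_cases h : i ≤ j <;> simp [Mut, ut, Matrix.vec, Matrix.mulVec_diagonal, h]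

lemma Mslt_mulVec_vec (X : Matrix (Fin n) (Fin n) ℝ) : Mslt n *ᵥ X.vec = (slt X).vec := by
  ext ⟨j, i⟩
  by_cases h : j < i <;> simp [Mslt, slt, Matrix.vec, Matrix.mulVec_diagonal, h]

lemma Muvec_mulVec (v : Fin n × Fin n → ℝ) : Muvec n *ᵥ v = fun q => v q.1 := by
  ext q
  simp [Muvec, Matrix.mulVec, dotProduct]

lemma Mslvec_mulVec (v : Fin n × Fin n → ℝ) : Mslvec n *ᵥ v = fun q => v q.1 := by
  ext q
  simp [Mslvec, Matrix.mulVec, dotProduct]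

end Vectorization

section LeadingBlock

variable {n : ℕ} {U : Matrix (Fin n) (Fin n) ℝ}

lemma pad_transpose (B : Matrix (Fin (n - 1)) (Fin (n - 1)) ℝ) : pad Bᵀ = (pad B)ᵀ := by
  ext i j
  by_cases hi : (i : ℕ) < n - 1 <;> by_cases hj : (j : ℕ) < n - 1 <;> simp [pad, hi, hj]

lemma IsUpperTri.inv_lead (hU : IsUpperTri U) (hdet : IsUnit U.det) :
    (lead U)⁻¹ = lead U⁻¹ := by
  refine Matrix.inv_eq_left_inv ?_
  cases n with
  | zero => ext a; exact absurd a.isLt (by omega)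
  | succ m =>
    ext a b
    have h := congrFun (congrFun (Matrix.nonsing_inv_mul U hdet)
      (Fin.castLE (Nat.sub_le _ 1) a)) (Fin.castLE (Nat.sub_le _ 1) b)
    have hlast : U (Fin.last m) (Fin.castLE (Nat.sub_le _ 1) b) = 0 :=
      hU _ _ (by rw [Fin.lt_def]; simp)
    rw [Matrix.mul_apply, Fin.sum_univ_castSucc, hlast, mul_zero, add_zero] at h
    simp only [Matrix.mul_apply, Matrix.one_apply, lead, Matrix.of_apply, Fin.ext_iff,
      Fin.val_castLE] at h ⊢
    exact h

lemma IsUpperTri.pad_lead_apply (hU : IsUpperTri U) (k : Fin n) {q : Fin n}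
    (hq : (q : ℕ) < n - 1) : pad (lead U) k q = U k q := by
  by_cases hk : (k : ℕ) < n - 1
  · simp [pad, lead, hk, hq]
  · simp only [pad, hk, Matrix.of_apply, dite_false]
    exact (hU k q (by rw [Fin.lt_def]; omega)).symm

end LeadingBlock

section Corrections

variable {n : ℕ} {L U : Matrix (Fin n) (Fin n) ℝ}

/-- The strictly lower triangular solution `ΔL` of `L ΔU + ΔL U = G`. -/
def lowerCorrection (L U G : Matrix (Fin n) (Fin n) ℝ) : Matrix (Fin n) (Fin n) ℝ :=
  L * slt (L⁻¹ * G * U⁻¹)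

/-- The upper triangular solution `ΔU` of `L ΔU + ΔL U = G`. -/
def upperCorrection (L U G : Matrix (Fin n) (Fin n) ℝ) : Matrix (Fin n) (Fin n) ℝ :=
  ut (L⁻¹ * G * U⁻¹) * U

lemma isStrictLowerTri_lowerCorrection (hL : IsLowerTri L) (G : Matrix (Fin n) (Fin n) ℝ) :
    IsStrictLowerTri (lowerCorrection L U G) :=
  hL.mul_isStrictLowerTri (isStrictLowerTri_slt _)

lemma isUpperTri_upperCorrection (hU : IsUpperTri U) (G : Matrix (Fin n) (Fin n) ℝ) :
    IsUpperTri (upperCorrection L U G) :=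
  (isUpperTri_ut _).mul hU

lemma mul_upperCorrection_add_lowerCorrection_mul (hL : IsUnit L.det) (hU : IsUnit U.det)
    (G : Matrix (Fin n) (Fin n) ℝ) :
    L * upperCorrection L U G + lowerCorrection L U G * U = G := by
  have h : L * upperCorrection L U G + lowerCorrection L U G * U
      = L * (ut (L⁻¹ * G * U⁻¹) + slt (L⁻¹ * G * U⁻¹)) * U := by
    simp only [upperCorrection, lowerCorrection]; noncomm_ring
  rw [h, ut_add_slt, ← Matrix.mul_assoc, ← Matrix.mul_assoc, Matrix.mul_nonsing_inv _ hL,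
    Matrix.one_mul, Matrix.mul_assoc, Matrix.nonsing_inv_mul _ hU, Matrix.mul_one]

lemma lowerCorrection_sub (G H : Matrix (Fin n) (Fin n) ℝ) :
    lowerCorrection L U (G - H) = lowerCorrection L U G - lowerCorrection L U H := by
  simp only [lowerCorrection, Matrix.mul_sub, Matrix.sub_mul, slt_sub]

lemma upperCorrection_sub (G H : Matrix (Fin n) (Fin n) ℝ) :
    upperCorrection L U (G - H) = upperCorrection L U G - upperCorrection L U H := by
  simp only [upperCorrection, Matrix.mul_sub, Matrix.sub_mul, ut_sub]

lemma YU_mulVec_vec (G : Matrix (Fin n) (Fin n) ℝ) :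
    YU L U *ᵥ G.vec = fun q => (upperCorrection L U G).vec q.1 := by
  simp only [YU, ← Matrix.mulVec_mulVec, Matrix.kronecker_mulVec_vec, Matrix.transpose_transpose,
    Mut_mulVec_vec, Matrix.one_mul, Muvec_mulVec, upperCorrection]

lemma YL_mulVec_vec (hU : IsUpperTri U) (hdet : IsUnit U.det) (G : Matrix (Fin n) (Fin n) ℝ) :
    YL L U *ᵥ G.vec = fun q => (lowerCorrection L U G).vec q.1 := by
  -- below the diagonal only the first `n - 1` columns of `U⁻¹` are seen
  have hslt : slt (L⁻¹ * G * pad (lead U⁻¹)) = slt (L⁻¹ * G * U⁻¹) := by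
    ext i j
    by_cases h : j < i
    · simp only [slt, Matrix.of_apply, if_pos h, Matrix.mul_apply]
      refine Finset.sum_congr rfl fun k _ => ?_
      rw [hU.inv.pad_lead_apply k (by rw [Fin.lt_def] at h; omega)]
    · simp [slt, h]
  simp only [YL, ← Matrix.mulVec_mulVec, Matrix.kronecker_mulVec_vec, pad_transpose,
    Matrix.transpose_transpose, hU.inv_lead hdet, Mslt_mulVec_vec, hslt, Matrix.transpose_one,
    Matrix.mul_one, Mslvec_mulVec, lowerCorrection]

lemma norm_upperCorrection_le (hU : IsUpperTri U) (G : Matrix (Fin n) (Fin n) ℝ) :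
    ‖upperCorrection L U G‖ ≤ spec (YU L U) * ‖G‖ := by
  rw [← norm_toLp_vec, ← norm_toLp_vec G,
    ← norm_toLp_subtype_of_eq_zero (P := fun p : Fin n × Fin n => p.2 ≤ p.1)
      (upperCorrection L U G).vec
      fun p hp => isUpperTri_upperCorrection hU G p.2 p.1 (not_le.mp hp),
    ← YU_mulVec_vec]
  exact norm_toLp_mulVec_le_spec _ _

lemma norm_lowerCorrection_le (hL : IsLowerTri L) (hU : IsUpperTri U) (hdet : IsUnit U.det)
    (G : Matrix (Fin n) (Fin n) ℝ) :
    ‖lowerCorrection L U G‖ ≤ spec (YL L U) * ‖G‖ := by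
  rw [← norm_toLp_vec, ← norm_toLp_vec G,
    ← norm_toLp_subtype_of_eq_zero (P := fun p : Fin n × Fin n => p.1 < p.2)
      (lowerCorrection L U G).vec
      fun p hp => isStrictLowerTri_lowerCorrection hL G p.2 p.1 (not_lt.mp hp),
    ← YL_mulVec_vec hU hdet]
  exact norm_toLp_mulVec_le_spec _ _

end Corrections

section LowerBound

variable {n : ℕ} {L U : Matrix (Fin n) (Fin n) ℝ}

lemma frobenius_norm_single_one (i j : Fin n) : ‖Matrix.single j i (1 : ℝ)‖ = 1 := by
  simp [frobenius_norm_eq_sqrt, Matrix.single_apply, ite_and]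

lemma lowerCorrection_single_apply (hL : IsUnitLowerTri L) {i j : Fin n}
    (hij : (j : ℕ) = i + 1) : lowerCorrection L U (Matrix.single j i 1) j i = U⁻¹ i i := by
  have hB : ∀ k l, (L⁻¹ * Matrix.single j i (1 : ℝ) * U⁻¹) k l = L⁻¹ k j * U⁻¹ i l := by
    simp [Matrix.mul_apply, Matrix.single_apply, ite_and, Finset.sum_ite_eq]
  have hlt : i < j := by rw [Fin.lt_def]; omega
  rw [lowerCorrection, Matrix.mul_apply, Finset.sum_eq_single j]
  · simp only [slt, Matrix.of_apply, if_pos hlt, hB, hL.1, hL.inv.1, one_mul]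
  · intro k _ hkj
    rcases lt_or_gt_of_ne hkj with hk | hk
    · have hik : ¬i < k := by rw [Fin.lt_def] at hk ⊢; omega
      simp only [slt, Matrix.of_apply, if_neg hik, mul_zero]
    · rw [hL.2 j k hk, zero_mul]
  · simp

lemma abs_inv_apply_self_le_spec_YL (hL : IsUnitLowerTri L) (hU : IsUpperTri U)
    (hdet : IsUnit U.det) {i j : Fin n} (hij : (j : ℕ) = i + 1) :
    |U⁻¹ i i| ≤ spec (YL L U) := by
  calc |U⁻¹ i i| = |lowerCorrection L U (Matrix.single j i 1) j i| := by
        rw [lowerCorrection_single_apply hL hij]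
    _ ≤ ‖lowerCorrection L U (Matrix.single j i 1)‖ := abs_apply_le_frobenius_norm _ _ _
    _ ≤ spec (YL L U) * ‖Matrix.single j i (1 : ℝ)‖ :=
        norm_lowerCorrection_le hL.isLowerTri hU hdet _
    _ = spec (YL L U) := by rw [frobenius_norm_single_one, mul_one]

end LowerBound

section Perturbation

variable {n : ℕ} {L U : Matrix (Fin n) (Fin n) ℝ}

lemma norm_lowerCorrection_mul_upperCorrection_le (hL : IsLowerTri L) (hU : IsUpperTri U)
    (hdet : IsUnit U.det) (G H : Matrix (Fin n) (Fin n) ℝ) :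
    ‖lowerCorrection L U G * upperCorrection L U H‖
      ≤ spec (YL L U) * spec (YU L U) * (‖G‖ * ‖H‖) :=
  calc _ ≤ ‖lowerCorrection L U G‖ * ‖upperCorrection L U H‖ := Matrix.frobenius_norm_mul _ _
    _ ≤ (spec (YL L U) * ‖G‖) * (spec (YU L U) * ‖H‖) :=
        mul_le_mul (norm_lowerCorrection_le hL hU hdet G) (norm_upperCorrection_le hU H)
          (norm_nonneg _) (mul_nonneg (norm_nonneg _) (norm_nonneg _))
    _ = _ := by ring

lemma norm_sub_lowerCorrection_mul_upperCorrection_le (hL : IsLowerTri L) (hU : IsUpperTri U)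
    (hdet : IsUnit U.det) (ΔA G : Matrix (Fin n) (Fin n) ℝ) :
    ‖ΔA - lowerCorrection L U G * upperCorrection L U G‖
      ≤ ‖ΔA‖ + spec (YL L U) * spec (YU L U) * ‖G‖ ^ 2 := by
  have h := norm_lowerCorrection_mul_upperCorrection_le hL hU hdet G G
  rw [← sq] at h
  linarith [norm_sub_le ΔA (lowerCorrection L U G * upperCorrection L U G)]

lemma norm_lowerCorrection_mul_upperCorrection_sub_le (hL : IsLowerTri L) (hU : IsUpperTri U)
    (hdet : IsUnit U.det) (G H : Matrix (Fin n) (Fin n) ℝ) :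
    ‖lowerCorrection L U G * upperCorrection L U G - lowerCorrection L U H * upperCorrection L U H‖
      ≤ spec (YL L U) * spec (YU L U) * (‖G‖ + ‖H‖) * ‖G - H‖ := by
  have hdiff : lowerCorrection L U G * upperCorrection L U G
        - lowerCorrection L U H * upperCorrection L U H
      = lowerCorrection L U (G - H) * upperCorrection L U G
        + lowerCorrection L U H * upperCorrection L U (G - H) := by
    rw [lowerCorrection_sub, upperCorrection_sub]; noncomm_ring
  rw [hdiff]
  refine (norm_add_le _ _).trans ?_
  have h₁ := norm_lowerCorrection_mul_upperCorrection_le hL hU hdet (G - H) G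
  have h₂ := norm_lowerCorrection_mul_upperCorrection_le hL hU hdet H (G - H)
  linarith

lemma IsUpperTri.add_apply_self_ne_zero (hL : IsUnitLowerTri L) (hU : IsUpperTri U)
    (hdet : IsUnit U.det) {ΔU : Matrix (Fin n) (Fin n) ℝ} {i : Fin n} (hi : (i : ℕ) + 1 < n)
    (hΔU : spec (YL L U) * |ΔU i i| < 1) : (U + ΔU) i i ≠ 0 := by
  intro h
  have hα := abs_inv_apply_self_le_spec_YL hL hU hdet (i := i) (j := ⟨i + 1, hi⟩) rfl
  have hΔ : ΔU i i = -U i i := by rw [Matrix.add_apply] at h; linarith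
  have h1 : |U⁻¹ i i| * |ΔU i i| = 1 := by
    rw [hΔ, abs_neg, ← abs_mul, hU.inv_apply_self_mul hdet, abs_one]
  nlinarith [mul_le_mul_of_nonneg_right hα (abs_nonneg (ΔU i i))]

theorem exists_lu_perturbation (hL : IsUnitLowerTri L) (hU : IsUpperTri U) (hdet : IsUnit U.det)
    (ΔA : Matrix (Fin n) (Fin n) ℝ)
    (h : 4 * (spec (YL L U) * spec (YU L U)) * ‖ΔA‖ < 1) :
    ∃ ΔL ΔU : Matrix (Fin n) (Fin n) ℝ, IsStrictLowerTri ΔL ∧ IsUpperTri ΔU ∧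
      (L + ΔL) * (U + ΔU) = L * U + ΔA ∧
      ‖ΔU‖ ≤ spec (YU L U) * quadSmallRoot (spec (YL L U) * spec (YU L U)) ‖ΔA‖ ∧
      ∀ i : Fin n, (i : ℕ) + 1 < n → (U + ΔU) i i ≠ 0 := by
  set α := spec (YL L U)
  set β := spec (YU L U)
  have hα : 0 ≤ α := norm_nonneg _
  have hβ : 0 ≤ β := norm_nonneg _
  obtain ⟨G, hG, hGr⟩ := exists_fixedPoint_norm_le_quadSmallRoot
    (fun G => ΔA - lowerCorrection L U G * upperCorrection L U G) (mul_nonneg hα hβ) h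
    (norm_sub_lowerCorrection_mul_upperCorrection_le hL.isLowerTri hU hdet ΔA)
    (fun G H => by
      rw [sub_sub_sub_cancel_left, norm_sub_rev]
      exact norm_lowerCorrection_mul_upperCorrection_sub_le hL.isLowerTri hU hdet G H)
  set ΔL := lowerCorrection L U G
  set ΔU := upperCorrection L U G
  have hε : 0 ≤ ‖ΔA‖ := norm_nonneg _
  have hΔU : ‖ΔU‖ ≤ β * quadSmallRoot (α * β) ‖ΔA‖ :=
    (norm_upperCorrection_le hU G).trans (mul_le_mul_of_nonneg_left hGr hβ)
  refine ⟨ΔL, ΔU, isStrictLowerTri_lowerCorrection hL.isLowerTri G,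
    isUpperTri_upperCorrection hU G, ?_, hΔU, fun i hi => ?_⟩
  · have hsplit := mul_upperCorrection_add_lowerCorrection_mul (L := L) hL.isUnit_det hdet G
    calc (L + ΔL) * (U + ΔU) = L * U + (L * ΔU + ΔL * U) + ΔL * ΔU := by noncomm_ring
      _ = L * U + ΔA := by rw [hsplit, ← hG]; abel
  · refine hU.add_apply_self_ne_zero hL hdet hi ?_
    have hsmall := two_mul_mul_quadSmallRoot_lt_one (mul_nonneg hα hβ) hε h
    have hr := quadSmallRoot_nonneg (c := α * β) hε
    calc α * |ΔU i i| ≤ α * (β * quadSmallRoot (α * β) ‖ΔA‖) :=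
          mul_le_mul_of_nonneg_left ((abs_apply_le_frobenius_norm _ _ _).trans hΔU) hα
      _ < 1 := by nlinarith [mul_nonneg (mul_nonneg hα hβ) hr]

end Perturbation

theorem stmt1_general {n : ℕ} (A L U ΔA : Matrix (Fin n) (Fin n) ℝ)
    (hL : IsUnitLowerTri L) (hU : IsUpperTri U)
    (hUdet : IsUnit U.det)
    (hA : A = L * U)
    (hcond : spec (YL L U) * spec (YU L U) * frob ΔA < 1 / 4) :
    ∃ ΔL ΔU : Matrix (Fin n) (Fin n) ℝ,
      IsStrictLowerTri ΔL ∧ IsUpperTri ΔU ∧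
      A + ΔA = (L + ΔL) * (U + ΔU) ∧
      (∀ ΔL' ΔU' : Matrix (Fin n) (Fin n) ℝ,
        IsStrictLowerTri ΔL' → IsUpperTri ΔU' →
        A + ΔA = (L + ΔL') * (U + ΔU') → ΔL' = ΔL ∧ ΔU' = ΔU) ∧
      frob ΔU ≤ 2 * spec (YU L U) * frob ΔA /
          (1 + Real.sqrt (1 - 4 * spec (YU L U) * spec (YL L U) * frob ΔA)) ∧
      2 * spec (YU L U) * frob ΔA /
          (1 + Real.sqrt (1 - 4 * spec (YU L U) * spec (YL L U) * frob ΔA)) ≤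
        2 * spec (YU L U) * frob ΔA := by
  simp only [frob_eq_norm] at hcond ⊢
  set α := spec (YL L U)
  set β := spec (YU L U)
  have hq : 2 * β * ‖ΔA‖ / (1 + √(1 - 4 * β * α * ‖ΔA‖)) = β * quadSmallRoot (α * β) ‖ΔA‖ := by
    rw [quadSmallRoot, show 4 * β * α * ‖ΔA‖ = 4 * (α * β) * ‖ΔA‖ by ring]
    ring
  obtain ⟨ΔL, ΔU, hΔL, hΔU, hfac, hbound, hdiag⟩ :=
    exists_lu_perturbation hL hU hUdet ΔA (by linarith)
  refine ⟨ΔL, ΔU, hΔL, hΔU, by rw [hA, hfac], fun ΔL' ΔU' hΔL' hΔU' hfac' => ?_, ?_, ?_⟩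
  · obtain ⟨hL', hU'⟩ := lu_unique (hL.add hΔL) (hL.add hΔL') (hU.add hΔU) (hU.add hΔU') hdiag
      (by rw [← hfac', hA, hfac])
    exact ⟨(add_left_cancel hL').symm, (add_left_cancel hU').symm⟩
  · rwa [hq]
  · rw [hq, show 2 * β * ‖ΔA‖ = β * (2 * ‖ΔA‖) by ring]
    exact mul_le_mul_of_nonneg_left (quadSmallRoot_le (norm_nonneg _)) (norm_nonneg _)

theorem stmt1 {n : ℕ} (A L U ΔA : Matrix (Fin n) (Fin n) ℝ)
    (hL : IsUnitLowerTri L) (hU : IsUpperTri U)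
    (hUdet : IsUnit U.det) (hUsub : IsUnit (lead U).det)
    (hA : A = L * U)
    (hcond : spec (YL L U) * spec (YU L U) * frob ΔA < 1 / 4) :
    ∃ ΔL ΔU : Matrix (Fin n) (Fin n) ℝ,
      IsStrictLowerTri ΔL ∧ IsUpperTri ΔU ∧
      A + ΔA = (L + ΔL) * (U + ΔU) ∧
      (∀ ΔL' ΔU' : Matrix (Fin n) (Fin n) ℝ,
        IsStrictLowerTri ΔL' → IsUpperTri ΔU' →
        A + ΔA = (L + ΔL') * (U + ΔU') → ΔL' = ΔL ∧ ΔU' = ΔU) ∧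
      frob ΔU ≤ 2 * spec (YU L U) * frob ΔA /
          (1 + Real.sqrt (1 - 4 * spec (YU L U) * spec (YL L U) * frob ΔA)) ∧
      2 * spec (YU L U) * frob ΔA /
          (1 + Real.sqrt (1 - 4 * spec (YU L U) * spec (YL L U) * frob ΔA)) ≤
        2 * spec (YU L U) * frob ΔA :=
  stmt1_general A L U ΔA hL hU hUdet hA hcond
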